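/- (Optimality certificate in the interior — Case 2 of Theorem 1.) Let τ ≥ −1, μ > 0, c ∈ ℝ, u_1, …, u_m ∈ ℝⁿ, y_1, …, y_m ∈ {−1, +1}. Let ξ ∈ ℝᵐ satisfy −τ/m ≤ ξ_i ≤ 1/m for all i, set v = ∑_{i=1}^m ξ_i y_i u_i, and suppose ‖v‖_∞ ≤ μ. Let x ∈ ℝⁿ satisfy: ‖x‖₂ ≤ 1; x_j = 0 whenever |v_j| < μ; x_j ≥ 0 whenever v_j = μ; x_j ≤ 0 whenever v_j = −μ; c − y_i⟨u_i, x⟩ ≥ 0 whenever ξ_i = 1/m; c − y_i⟨u_i, x⟩ ≤ 0 whenever ξ_i = −τ/m; and c − y_i⟨u_i, x⟩ = 0 whenever −τ/m < ξ_i < 1/m. Then x is a global minimizer of P(x) = μ‖x‖₁ + (1/m)∑_{i=1}^m L_τ(c − y_i⟨u_i, x⟩) over {x : ‖x‖₂ ≤ 1}, and P(x) = c∑_{i=1}^m ξ_i. -/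

import Mathlib

/-!
Weak duality with a certificate. For every `x'` the multipliers `ξ` give the lower bound
`c ∑ ξ_i = ⟪v, x'⟫ + ∑ ξ_i r_i(x') ≤ μ‖x'‖₁ + (1/m) ∑ L_τ(r_i(x'))`, where `r_i` is the margin
residual `c - y_i⟪u_i, x'⟫`: coordinatewise `v_j x'_j ≤ μ|x'_j|` because `|v_j| ≤ μ`, and
`ξ_i t ≤ (1/m) L_τ(t)` because `-τ/m ≤ ξ_i ≤ 1/m`. The sign and complementarity conditions on `x`
are exactly the equality cases of these two scalar inequalities, so `x` attains the bound.
-/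

open scoped RealInnerProductSpace

noncomputable def pinballLoss (τ t : ℝ) : ℝ := if 0 ≤ t then t else -τ * t

section Scalar

variable {τ s ξ t : ℝ}

lemma mul_le_mul_pinballLoss (hlo : -τ * s ≤ ξ) (hhi : ξ ≤ s) :
    ξ * t ≤ s * pinballLoss τ t := by
  unfold pinballLoss
  split_ifs with ht
  · exact mul_le_mul_of_nonneg_right hhi ht
  · calc ξ * t ≤ -τ * s * t := mul_le_mul_of_nonpos_right hlo (le_of_not_ge ht)
      _ = s * (-τ * t) := by ring

lemma mul_eq_mul_pinballLoss (hlo : -τ * s ≤ ξ) (hhi : ξ ≤ s)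
    (h_at_hi : ξ = s → 0 ≤ t) (h_at_lo : ξ = -τ * s → t ≤ 0)
    (h_between : -τ * s < ξ → ξ < s → t = 0) :
    ξ * t = s * pinballLoss τ t := by
  unfold pinballLoss
  rcases hhi.eq_or_lt with rfl | hhi
  · rw [if_pos (h_at_hi rfl)]
  rcases hlo.eq_or_lt with hlo | hlo
  · rcases (h_at_lo hlo.symm).eq_or_lt with rfl | ht
    · simp
    · rw [if_neg (not_le.mpr ht), ← hlo]
      ring
  · simp [h_between hlo hhi]

variable {a μ : ℝ}

lemma mul_le_mul_abs (ha : |a| ≤ μ) : a * t ≤ μ * |t| :=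
  calc a * t ≤ |a| * |t| := (le_abs_self _).trans (abs_mul a t).le
    _ ≤ μ * |t| := mul_le_mul_of_nonneg_right ha (abs_nonneg t)

lemma mul_eq_mul_abs (ha : |a| ≤ μ) (h_lt : |a| < μ → t = 0)
    (h_pos : a = μ → 0 ≤ t) (h_neg : a = -μ → t ≤ 0) : a * t = μ * |t| := by
  rcases ha.lt_or_eq with ha | ha
  · simp [h_lt ha]
  rcases eq_or_eq_neg_of_abs_eq ha with rfl | rfl
  · rw [abs_of_nonneg (h_pos rfl)]
  · rw [abs_of_nonpos (h_neg rfl)]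
    ring

end Scalar

section Duality

variable {ι κ : Type*} [Fintype ι] [Fintype κ] (c : ℝ) (ξ y : ι → ℝ)
  (u : ι → EuclideanSpace ℝ κ) (x : EuclideanSpace ℝ κ)

lemma sum_mul_add_sum_mul_residual :
    ∑ j, (∑ i, ξ i • y i • u i) j * x j + ∑ i, ξ i * (c - y i * ⟪u i, x⟫) = c * ∑ i, ξ i := by
  have hdual : ∑ j, (∑ i, ξ i • y i • u i) j * x j = ∑ i, ξ i * (y i * ⟪u i, x⟫) :=
    calc ∑ j, (∑ i, ξ i • y i • u i) j * x j = ⟪∑ i, ξ i • y i • u i, x⟫ := by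
          simp only [PiLp.inner_apply, RCLike.inner_apply, conj_trivial, mul_comm]
      _ = ∑ i, ξ i * (y i * ⟪u i, x⟫) := by simp only [sum_inner, real_inner_smul_left]
  rw [hdual, Finset.mul_sum, ← Finset.sum_add_distrib]
  exact Finset.sum_congr rfl fun i _ => by ring

variable {τ μ s : ℝ}

lemma dual_value_le_objective (hξ : ∀ i, -τ * s ≤ ξ i ∧ ξ i ≤ s)
    (hv : ∀ j, |(∑ i, ξ i • y i • u i) j| ≤ μ) :
    c * ∑ i, ξ i ≤ μ * ∑ j, |x j| + s * ∑ i, pinballLoss τ (c - y i * ⟪u i, x⟫) := by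
  rw [← sum_mul_add_sum_mul_residual c ξ y u x, Finset.mul_sum, Finset.mul_sum]
  exact add_le_add (Finset.sum_le_sum fun j _ => mul_le_mul_abs (hv j))
    (Finset.sum_le_sum fun i _ => mul_le_mul_pinballLoss (hξ i).1 (hξ i).2)

lemma objective_eq_dual_value (hξ : ∀ i, -τ * s ≤ ξ i ∧ ξ i ≤ s)
    (hv : ∀ j, |(∑ i, ξ i • y i • u i) j| ≤ μ)
    (hx_lt : ∀ j, |(∑ i, ξ i • y i • u i) j| < μ → x j = 0)
    (hx_pos : ∀ j, (∑ i, ξ i • y i • u i) j = μ → 0 ≤ x j)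
    (hx_neg : ∀ j, (∑ i, ξ i • y i • u i) j = -μ → x j ≤ 0)
    (h_at_hi : ∀ i, ξ i = s → 0 ≤ c - y i * ⟪u i, x⟫)
    (h_at_lo : ∀ i, ξ i = -τ * s → c - y i * ⟪u i, x⟫ ≤ 0)
    (h_between : ∀ i, -τ * s < ξ i → ξ i < s → c - y i * ⟪u i, x⟫ = 0) :
    μ * ∑ j, |x j| + s * ∑ i, pinballLoss τ (c - y i * ⟪u i, x⟫) = c * ∑ i, ξ i := by
  rw [← sum_mul_add_sum_mul_residual c ξ y u x, Finset.mul_sum, Finset.mul_sum]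
  exact congrArg₂ (· + ·)
    (Finset.sum_congr rfl fun j _ =>
      (mul_eq_mul_abs (hv j) (hx_lt j) (hx_pos j) (hx_neg j)).symm)
    (Finset.sum_congr rfl fun i _ =>
      (mul_eq_mul_pinballLoss (hξ i).1 (hξ i).2 (h_at_hi i) (h_at_lo i) (h_between i)).symm)

end Duality

theorem epSVM_interior_optimality_general {n m : ℕ} (τ μ c : ℝ)
    (u : Fin m → EuclideanSpace ℝ (Fin n)) (y : Fin m → ℝ)
    (L : ℝ → ℝ) (hL : L = fun t => if 0 ≤ t then t else -τ * t)
    (ξ : Fin m → ℝ) (hξ : ∀ i, -τ / (m : ℝ) ≤ ξ i ∧ ξ i ≤ 1 / (m : ℝ))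
    (v : EuclideanSpace ℝ (Fin n)) (hv : v = ∑ i : Fin m, ξ i • (y i • u i))
    (hvμ : ∀ j, |v j| ≤ μ)
    (x : EuclideanSpace ℝ (Fin n))
    (hx0 : ∀ j, |v j| < μ → x j = 0)
    (hxp : ∀ j, v j = μ → 0 ≤ x j)
    (hxn : ∀ j, v j = -μ → x j ≤ 0)
    (hc1 : ∀ i, ξ i = 1 / (m : ℝ) → 0 ≤ c - y i * ⟪u i, x⟫)
    (hc2 : ∀ i, ξ i = -τ / (m : ℝ) → c - y i * ⟪u i, x⟫ ≤ 0)
    (hc3 : ∀ i, -τ / (m : ℝ) < ξ i → ξ i < 1 / (m : ℝ) → c - y i * ⟪u i, x⟫ = 0) :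
    (∀ x' : EuclideanSpace ℝ (Fin n), ‖x'‖ ≤ 1 →
        μ * (∑ j : Fin n, |x j|) +
            (1 / (m : ℝ)) * ∑ i : Fin m, L (c - y i * ⟪u i, x⟫) ≤
          μ * (∑ j : Fin n, |x' j|) +
            (1 / (m : ℝ)) * ∑ i : Fin m, L (c - y i * ⟪u i, x'⟫)) ∧
      μ * (∑ j : Fin n, |x j|) +
          (1 / (m : ℝ)) * ∑ i : Fin m, L (c - y i * ⟪u i, x⟫) =
        c * ∑ i : Fin m, ξ i := by
  subst hL hv
  simp only [div_eq_mul_one_div (-τ)] at hξ hc2 hc3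
  have hopt := objective_eq_dual_value c ξ y u x hξ hvμ hx0 hxp hxn hc1 hc2 hc3
  exact ⟨fun x' _ => hopt.trans_le (dual_value_le_objective c ξ y u x' hξ hvμ), hopt⟩

/-- Case 2 of Theorem 1: optimality certificate in the interior. With `v = ∑ ξ_i y_i u_i`
and `‖v‖_∞ ≤ μ`, any `x` in the unit ball satisfying the listed sign and complementarity
conditions globally minimizes the ep-SVM objective over the unit ball, with optimal value
`c ∑ ξ_i`. -/
theorem epSVM_interior_optimality {n m : ℕ} (hm : 0 < m) (τ μ c : ℝ) (hτ : -1 ≤ τ) (hμ : 0 < μ)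
    (u : Fin m → EuclideanSpace ℝ (Fin n)) (y : Fin m → ℝ)
    (hy : ∀ i, y i = 1 ∨ y i = -1)
    (L : ℝ → ℝ) (hL : L = fun t => if 0 ≤ t then t else -τ * t)
    (ξ : Fin m → ℝ) (hξ : ∀ i, -τ / (m : ℝ) ≤ ξ i ∧ ξ i ≤ 1 / (m : ℝ))
    (v : EuclideanSpace ℝ (Fin n)) (hv : v = ∑ i : Fin m, ξ i • (y i • u i))
    (hvμ : ∀ j, |v j| ≤ μ)
    (x : EuclideanSpace ℝ (Fin n)) (hx2 : ‖x‖ ≤ 1)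
    (hx0 : ∀ j, |v j| < μ → x j = 0)
    (hxp : ∀ j, v j = μ → 0 ≤ x j)
    (hxn : ∀ j, v j = -μ → x j ≤ 0)
    (hc1 : ∀ i, ξ i = 1 / (m : ℝ) → 0 ≤ c - y i * ⟪u i, x⟫)
    (hc2 : ∀ i, ξ i = -τ / (m : ℝ) → c - y i * ⟪u i, x⟫ ≤ 0)
    (hc3 : ∀ i, -τ / (m : ℝ) < ξ i → ξ i < 1 / (m : ℝ) → c - y i * ⟪u i, x⟫ = 0) :
    (∀ x' : EuclideanSpace ℝ (Fin n), ‖x'‖ ≤ 1 →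
        μ * (∑ j : Fin n, |x j|) +
            (1 / (m : ℝ)) * ∑ i : Fin m, L (c - y i * ⟪u i, x⟫) ≤
          μ * (∑ j : Fin n, |x' j|) +
            (1 / (m : ℝ)) * ∑ i : Fin m, L (c - y i * ⟪u i, x'⟫)) ∧
      μ * (∑ j : Fin n, |x j|) +
          (1 / (m : ℝ)) * ∑ i : Fin m, L (c - y i * ⟪u i, x⟫) =
        c * ∑ i : Fin m, ξ i :=
  epSVM_interior_optimality_general τ μ c u y L hL ξ hξ v hv hvμ x hx0 hxp hxn hc1 hc2 hc3
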